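/- arXiv:2405.03965 — 3 statements merged into one kernel-verified Lean document; each statement's English description precedes it below -/
import Mathlib

section
/- Let $b : (0, \infty) \to \mathbb{R}$ be a bounded $C^2$ solution of $(r b'(r))' = 2 r b(r)(e_1^2 f(r)^2 + e_2^2 g(r)^2) - 2 e_2 r g(r)^2$ on $(0, \infty)$, where $e_1, e_2 > 0$ and $f, g$ are continuous with $f(r) = O(r^{N(1-\varepsilon)})$ and $g(r) = O(r^{M(1-\varepsilon)})$ as $r \to 0$ for some $N, M > 0$ and $\varepsilon \in (0,1)$, and suppose $\liminf_{r \to 0^+} r|b'(r)| = 0$. Then $\lim_{r \to 0^+} b(r)$ exists and is finite. -/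
/-!
Put `φ r = r b'(r)`. Near `0` the functions `f`, `g`, `b` are bounded, so the equation gives
`φ' = O(1)`; thus `φ` is Lipschitz near `0` and has a limit at `0⁺`, which the `liminf` hypothesis
forces to be `0`. Hence `|φ r| ≤ A r`, i.e. `b'` is bounded near `0`, and `b`, being Lipschitz
there, has a limit at `0⁺` by completeness.
-/

open Set Filter Topology Asymptotics

theorem UniformContinuousOn.exists_tendsto_nhdsWithin {α β : Type*} [UniformSpace α]
    [UniformSpace β] [CompleteSpace β] {f : α → β} {s : Set α} {x : α}
    (hf : UniformContinuousOn f s) (hx : x ∈ closure s) : ∃ L, Tendsto f (𝓝[s] x) (𝓝 L) := by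
  have := mem_closure_iff_nhdsWithin_neBot.1 hx
  exact cauchy_map_iff_exists_tendsto.1
    (((cauchy_nhds (a := x)).mono nhdsWithin_le_nhds).map_of_le hf inf_le_right)

section BoundedDerivative

variable {E : Type*} [NormedAddCommGroup E] [NormedSpace ℝ E] {f f' : ℝ → E} {a b C : ℝ}

theorem exists_tendsto_nhdsGT_of_norm_deriv_le [CompleteSpace E] (hab : a < b)
    (hf : ∀ x ∈ Ioo a b, HasDerivAt f (f' x) x) (bound : ∀ x ∈ Ioo a b, ‖f' x‖ ≤ C) :
    ∃ L, Tendsto f (𝓝[>] a) (𝓝 L) := by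
  have hlip : LipschitzOnWith C.toNNReal f (Ioo a b) :=
    (convex_Ioo a b).lipschitzOnWith_of_nnnorm_hasDerivWithin_le
      (fun x hx => (hf x hx).hasDerivWithinAt)
      (fun x hx => by simpa only [norm_toNNReal] using Real.toNNReal_le_toNNReal (bound x hx))
  rw [← nhdsWithin_Ioo_eq_nhdsGT hab]
  exact hlip.uniformContinuousOn.exists_tendsto_nhdsWithin
    (by rw [closure_Ioo hab.ne]; exact left_mem_Icc.2 hab.le)

theorem norm_le_mul_sub_of_liminf_norm_eq_zero [CompleteSpace E] (hab : a < b)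
    (hf : ∀ x ∈ Ioo a b, HasDerivAt f (f' x) x) (bound : ∀ x ∈ Ioo a b, ‖f' x‖ ≤ C)
    (hlim : liminf (fun x => ‖f x‖) (𝓝[>] a) = 0) :
    ∀ x ∈ Ioo a b, ‖f x‖ ≤ C * (x - a) := by
  obtain ⟨L, hL⟩ := exists_tendsto_nhdsGT_of_norm_deriv_le hab hf bound
  have hL0 : L = 0 := norm_eq_zero.1 (hL.norm.liminf_eq ▸ hlim)
  subst hL0
  intro x hx
  have hmvt : ∀ y ∈ Ioo a x, ‖f x - f y‖ ≤ C * ‖x - y‖ := fun y hy =>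
    (convex_Ioo a b).norm_image_sub_le_of_norm_hasDerivWithin_le
      (fun z hz => (hf z hz).hasDerivWithinAt) bound ⟨hy.1, hy.2.trans hx.2⟩ hx
  have hlhs : Tendsto (fun y => ‖f x - f y‖) (𝓝[>] a) (𝓝 ‖f x - 0‖) := (hL.const_sub _).norm
  have hrhs : Tendsto (fun y => C * ‖x - y‖) (𝓝[>] a) (𝓝 (C * ‖x - a‖)) :=
    ((continuous_const.sub continuous_id).norm.const_mul C).continuousWithinAt
  simpa [Real.norm_of_nonneg (sub_nonneg.2 hx.1.le)] using
    le_of_tendsto_of_tendsto hlhs hrhs (eventually_of_mem (Ioo_mem_nhdsGT hx.1) hmvt)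

end BoundedDerivative

theorem isBigO_one_nhdsGT_zero_of_abs_le_mul_rpow {f : ℝ → ℝ} {C p r₀ : ℝ} (hp : 0 < p)
    (hr₀ : 0 < r₀) (h : ∀ r ∈ Ioo 0 r₀, |f r| ≤ C * r ^ p) :
    f =O[𝓝[>] 0] (fun _ => (1 : ℝ)) := by
  have hpow : (fun r : ℝ => r ^ p) =O[𝓝[>] 0] (fun _ => (1 : ℝ)) :=
    ((Real.continuousAt_rpow_const 0 p (Or.inr hp.le)).tendsto.mono_left
      nhdsWithin_le_nhds).isBigO_one ℝ
  refine (IsBigO.of_bound C ?_).trans hpow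
  filter_upwards [Ioo_mem_nhdsGT hr₀] with r hr
  rw [Real.norm_eq_abs, Real.norm_eq_abs, abs_of_nonneg (Real.rpow_nonneg hr.1.le p)]
  exact h r hr

theorem ContDiffOn.hasDerivAt_deriv {F : Type*} [NormedAddCommGroup F] [NormedSpace ℝ F]
    {f : ℝ → F} {s : Set ℝ} {x : ℝ} (hf : ContDiffOn ℝ 1 f s) (hs : IsOpen s) (hx : x ∈ s) :
    HasDerivAt f (deriv f x) x :=
  ((hf.differentiableOn one_ne_zero).differentiableAt (hs.mem_nhds hx)).hasDerivAt

theorem isBigO_one_vortex_source {l : Filter ℝ} {b f g : ℝ → ℝ} (e₁ e₂ : ℝ)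
    (hr : (fun r : ℝ => r) =O[l] (fun _ => (1 : ℝ))) (hb : b =O[l] (fun _ => (1 : ℝ)))
    (hf : f =O[l] (fun _ => (1 : ℝ))) (hg : g =O[l] (fun _ => (1 : ℝ))) :
    (fun r => 2 * r * b r * (e₁ ^ 2 * f r ^ 2 + e₂ ^ 2 * g r ^ 2) - 2 * e₂ * r * g r ^ 2)
      =O[l] (fun _ => (1 : ℝ)) := by
  have hgain : (fun r => 2 * r * b r * (e₁ ^ 2 * f r ^ 2 + e₂ ^ 2 * g r ^ 2))
      =O[l] (fun _ => (1 : ℝ)) := by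
    simpa using ((hr.const_mul_left 2).mul hb).mul
      (((hf.pow 2).const_mul_left _).add ((hg.pow 2).const_mul_left _))
  have hsource : (fun r => 2 * e₂ * r * g r ^ 2) =O[l] (fun _ => (1 : ℝ)) := by
    simpa using (hr.const_mul_left (2 * e₂)).mul (hg.pow 2)
  exact hgain.sub hsource

theorem stmt_10_general (b f g : ℝ → ℝ) (e₁ e₂ N M ε : ℝ)
    (hN : 0 < N) (hM : 0 < M) (hε : ε ∈ Set.Ioo (0 : ℝ) 1)
    (hb : ContDiffOn ℝ 2 b (Set.Ioi 0))
    (hbdd : ∃ K : ℝ, ∀ r ∈ Set.Ioi (0 : ℝ), |b r| ≤ K)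
    (heq : ∀ r ∈ Set.Ioi (0 : ℝ),
      deriv (fun s => s * deriv b s) r =
        2 * r * b r * (e₁ ^ 2 * (f r) ^ 2 + e₂ ^ 2 * (g r) ^ 2) - 2 * e₂ * r * (g r) ^ 2)
    (hfO : ∃ C > (0 : ℝ), ∃ r₀ > (0 : ℝ), ∀ r ∈ Set.Ioo 0 r₀, |f r| ≤ C * r ^ (N * (1 - ε)))
    (hgO : ∃ C > (0 : ℝ), ∃ r₀ > (0 : ℝ), ∀ r ∈ Set.Ioo 0 r₀, |g r| ≤ C * r ^ (M * (1 - ε)))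
    (hliminf : Filter.liminf (fun r => r * |deriv b r|) (nhdsWithin 0 (Set.Ioi 0)) = 0) :
    ∃ C₁ : ℝ, Filter.Tendsto b (nhdsWithin 0 (Set.Ioi 0)) (nhds C₁) := by
  obtain ⟨K, hK⟩ := hbdd
  obtain ⟨Cf, -, rf, hrf, hfC⟩ := hfO
  obtain ⟨Cg, -, rg, hrg, hgC⟩ := hgO
  have hε' : 0 < 1 - ε := sub_pos.2 hε.2
  have hφ'O : deriv (fun s => s * deriv b s) =O[𝓝[>] 0] (fun _ => (1 : ℝ)) :=
    (isBigO_one_vortex_source e₁ e₂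
      ((tendsto_nhdsWithin_of_tendsto_nhds tendsto_id).isBigO_one ℝ)
      (IsBigO.of_bound K (eventually_nhdsWithin_of_forall fun r hr => by simpa using hK r hr))
      (isBigO_one_nhdsGT_zero_of_abs_le_mul_rpow (mul_pos hN hε') hrf hfC)
      (isBigO_one_nhdsGT_zero_of_abs_le_mul_rpow (mul_pos hM hε') hrg hgC)).congr'
      (eventually_nhdsWithin_of_forall fun r hr => (heq r hr).symm) EventuallyEq.rfl
  obtain ⟨A, hA⟩ := hφ'O.bound
  obtain ⟨r₀, hr₀, hAr₀⟩ := mem_nhdsGT_iff_exists_Ioo_subset.1 hA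
  have hφ : ContDiffOn ℝ 1 (fun s => s * deriv b s) (Ioi 0) :=
    contDiffOn_id.mul (hb.deriv_of_isOpen isOpen_Ioi (by norm_num))
  have hliminf' : liminf (fun r => ‖r * deriv b r‖) (𝓝[>] 0) = 0 := by
    refine (liminf_congr (eventually_nhdsWithin_of_forall fun r (hr : 0 < r) => ?_)).trans hliminf
    rw [norm_mul, Real.norm_of_nonneg hr.le, Real.norm_eq_abs]
  have hφA := norm_le_mul_sub_of_liminf_norm_eq_zero hr₀
    (fun r hr => hφ.hasDerivAt_deriv isOpen_Ioi hr.1)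
    (fun r hr => by simpa using hAr₀ hr) hliminf'
  refine exists_tendsto_nhdsGT_of_norm_deriv_le hr₀
    (fun r hr => (hb.of_le one_le_two).hasDerivAt_deriv isOpen_Ioi hr.1) (C := A) fun r hr => ?_
  have hrA := hφA r hr
  rw [norm_mul, Real.norm_of_nonneg hr.1.le, sub_zero, mul_comm A] at hrA
  exact le_of_mul_le_mul_left hrA hr.1

theorem stmt_10 (b f g : ℝ → ℝ) (e₁ e₂ N M ε : ℝ)
    (he₁ : 0 < e₁) (he₂ : 0 < e₂) (hN : 0 < N) (hM : 0 < M) (hε : ε ∈ Set.Ioo (0 : ℝ) 1)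
    (hb : ContDiffOn ℝ 2 b (Set.Ioi 0))
    (hbdd : ∃ K : ℝ, ∀ r ∈ Set.Ioi (0 : ℝ), |b r| ≤ K)
    (hf : ContinuousOn f (Set.Ioi 0)) (hg : ContinuousOn g (Set.Ioi 0))
    (heq : ∀ r ∈ Set.Ioi (0 : ℝ),
      deriv (fun s => s * deriv b s) r =
        2 * r * b r * (e₁ ^ 2 * (f r) ^ 2 + e₂ ^ 2 * (g r) ^ 2) - 2 * e₂ * r * (g r) ^ 2)
    (hfO : ∃ C > (0 : ℝ), ∃ r₀ > (0 : ℝ), ∀ r ∈ Set.Ioo 0 r₀, |f r| ≤ C * r ^ (N * (1 - ε)))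
    (hgO : ∃ C > (0 : ℝ), ∃ r₀ > (0 : ℝ), ∀ r ∈ Set.Ioo 0 r₀, |g r| ≤ C * r ^ (M * (1 - ε)))
    (hliminf : Filter.liminf (fun r => r * |deriv b r|) (nhdsWithin 0 (Set.Ioi 0)) = 0) :
    ∃ C₁ : ℝ, Filter.Tendsto b (nhdsWithin 0 (Set.Ioi 0)) (nhds C₁) :=
  stmt_10_general b f g e₁ e₂ N M ε hN hM hε hb hbdd heq hfO hgO hliminf
end

section
/- Let $e_1 > 0$ and suppose $a \in C^2((0,\infty))$ satisfies, for all sufficiently large $r$, $\left(\frac{a'(r)}{r}\right)' < \frac{e_1^2}{r}\left(a(r) - \frac{1}{e_1}\right)$, together with $0 \leq a(r) \leq 1/e_1$ for all $r$, and $\liminf_{r \to \infty} \frac{|a'(r)|}{r} = 0$. Then there exists $R > 0$ such that $a'(r) > 0$ for all $r \geq R$, and $a(r)$ converges to a limit $a_\infty \in [0, 1/e_1]$ as $r \to \infty$. -/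
/-!
Write `g r = a'(r) / r`. The differential inequality and `a ≤ 1 / e₁` give `g' < 0`, so `g` is
strictly decreasing for large `r`. If `g` ever became nonpositive it would then stay below a
negative constant, forcing `a' ≤ -δ < 0` and hence `a → -∞`, against `a ≥ 0`. So `a' > 0`
eventually, and `a` is increasing and bounded above, hence convergent.
-/

open Filter Set Topology

theorem strictMonoOn_of_deriv_pos_of_isOpen {D : Set ℝ} (hD : Convex ℝ D) (hDo : IsOpen D)
    {f : ℝ → ℝ} (hf' : ∀ x ∈ D, 0 < deriv f x) : StrictMonoOn f D :=
  strictMonoOn_of_deriv_pos hD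
    (fun x hx => (differentiableAt_of_deriv_ne_zero (hf' x hx).ne').continuousAt.continuousWithinAt)
    (by rwa [hDo.interior_eq])

theorem strictAntiOn_of_deriv_neg_of_isOpen {D : Set ℝ} (hD : Convex ℝ D) (hDo : IsOpen D)
    {f : ℝ → ℝ} (hf' : ∀ x ∈ D, deriv f x < 0) : StrictAntiOn f D :=
  strictAntiOn_of_deriv_neg hD
    (fun x hx => (differentiableAt_of_deriv_ne_zero (hf' x hx).ne).continuousAt.continuousWithinAt)
    (by rwa [hDo.interior_eq])

theorem tendsto_atBot_of_deriv_le_neg {f : ℝ → ℝ} {r δ : ℝ} (hδ : δ < 0)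
    (hf' : ∀ x ≥ r, deriv f x ≤ δ) : Tendsto f atTop atBot := by
  have hdiff : ∀ x ≥ r, DifferentiableAt ℝ f x := fun x hx =>
    differentiableAt_of_deriv_ne_zero (by linarith [hf' x hx])
  have hdecay : ∀ x ≥ r, f x ≤ f r + δ * (x - r) := by
    intro x hx
    have := (convex_Ici r).image_sub_le_mul_sub_of_deriv_le
      (fun y hy => (hdiff y hy).continuousAt.continuousWithinAt)
      (fun y hy => (hdiff y (interior_subset hy)).differentiableWithinAt)
      (fun y hy => hf' y (interior_subset hy)) r self_mem_Ici x hx hx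
    linarith
  refine tendsto_atBot_mono' atTop (eventually_ge_atTop r |>.mono hdecay) ?_
  exact tendsto_atBot_add_const_left _ (f r)
    ((tendsto_atTop_add_const_right _ (-r) tendsto_id).const_mul_atTop_of_neg hδ)

theorem MonotoneOn.exists_tendsto_atTop {α β : Type*} [SemilatticeSup α] [Nonempty α]
    [ConditionallyCompleteLinearOrder β] [TopologicalSpace β] [OrderTopology β]
    {f : α → β} {r : α} (hf : MonotoneOn f (Ici r)) (hb : BddAbove (f '' Ici r)) :
    ∃ L, Tendsto f atTop (𝓝 L) := by
  have hmono : Monotone fun x => f (x ⊔ r) := fun x y hxy =>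
    hf le_sup_right le_sup_right (sup_le_sup_right hxy r)
  have hbdd : BddAbove (range fun x => f (x ⊔ r)) :=
    hb.mono (range_subset_iff.2 fun x => mem_image_of_mem f le_sup_right)
  refine ⟨_, (tendsto_atTop_ciSup hmono hbdd).congr' ?_⟩
  filter_upwards [eventually_ge_atTop r] with x hx
  rw [sup_eq_left.2 hx]

theorem deriv_pos_of_strictAntiOn_deriv_div_self {a : ℝ → ℝ} {R₀ m : ℝ} (hR₀ : 0 ≤ R₀)
    (hg : StrictAntiOn (fun s => deriv a s / s) (Ioi R₀)) (hm : ∀ r > R₀, m ≤ a r) :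
    ∀ r > R₀, 0 < deriv a r := by
  intro r hr
  by_contra! hr'
  have hr₀ : 0 < r := hR₀.trans_lt hr
  set c := deriv a (r + 1) / (r + 1)
  have hc : c < 0 := (hg (mem_Ioi.2 hr) (mem_Ioi.2 (by linarith)) (lt_add_one r)).trans_le
    (div_nonpos_of_nonpos_of_nonneg hr' hr₀.le)
  have hslope : ∀ x ≥ r + 1, deriv a x ≤ c * (r + 1) := by
    intro x hx
    have hgx : deriv a x / x ≤ c :=
      hg.antitoneOn (mem_Ioi.2 (by linarith)) (mem_Ioi.2 (by linarith)) hx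
    calc deriv a x = deriv a x / x * x := (div_mul_cancel₀ _ (by linarith)).symm
      _ ≤ c * x := mul_le_mul_of_nonneg_right hgx (by linarith)
      _ ≤ c * (r + 1) := mul_le_mul_of_nonpos_left hx hc.le
  have hdiverge : Tendsto a atTop atBot :=
    tendsto_atBot_of_deriv_le_neg (mul_neg_of_neg_of_pos hc (by linarith)) hslope
  obtain ⟨x, hxm, hx⟩ :=
    (hdiverge.eventually (eventually_lt_atBot m) |>.and (eventually_gt_atTop R₀)).exists
  exact (hm x hx).not_gt hxm

theorem stmt_17_general (e₁ : ℝ) (a : ℝ → ℝ)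
    (hineq : ∃ R₀ > (0 : ℝ), ∀ r ≥ R₀,
      deriv (fun s => deriv a s / s) r < e₁ ^ 2 / r * (a r - 1 / e₁))
    (hbdd : ∀ r > (0 : ℝ), a r ∈ Set.Icc 0 (1 / e₁)) :
    (∃ R > (0 : ℝ), ∀ r ≥ R, 0 < deriv a r) ∧
    ∃ aInf ∈ Set.Icc (0 : ℝ) (1 / e₁), Filter.Tendsto a Filter.atTop (nhds aInf) := by
  obtain ⟨R₀, hR₀, hineq⟩ := hineq
  have hg : StrictAntiOn (fun s => deriv a s / s) (Ioi R₀) :=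
    strictAntiOn_of_deriv_neg_of_isOpen (convex_Ioi R₀) isOpen_Ioi fun r hr =>
      (hineq r hr.le).trans_le <| mul_nonpos_of_nonneg_of_nonpos
        (div_nonneg (sq_nonneg e₁) (hR₀.trans hr).le)
        (sub_nonpos.2 (hbdd r (hR₀.trans hr)).2)
  have hpos : ∀ r > R₀, 0 < deriv a r :=
    deriv_pos_of_strictAntiOn_deriv_div_self hR₀.le hg fun r hr => (hbdd r (hR₀.trans hr)).1
  have hmono : MonotoneOn a (Ici (R₀ + 1)) :=
    (strictMonoOn_of_deriv_pos_of_isOpen (convex_Ioi R₀) isOpen_Ioi hpos).monotoneOn.mono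
      (Ici_subset_Ioi.2 (lt_add_one R₀))
  obtain ⟨L, hL⟩ := hmono.exists_tendsto_atTop ⟨1 / e₁, by
    rintro _ ⟨x, hx, rfl⟩
    exact (hbdd x (by linarith [mem_Ici.1 hx])).2⟩
  refine ⟨⟨R₀ + 1, by linarith, fun r hr => hpos r (by linarith)⟩, L, ?_, hL⟩
  exact isClosed_Icc.mem_of_tendsto hL ((eventually_gt_atTop 0).mono hbdd)

theorem stmt_17 (e₁ : ℝ) (he₁ : 0 < e₁) (a : ℝ → ℝ)
    (ha : ContDiff ℝ 2 a)
    (hineq : ∃ R₀ > (0 : ℝ), ∀ r ≥ R₀,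
      deriv (fun s => deriv a s / s) r < e₁ ^ 2 / r * (a r - 1 / e₁))
    (hbdd : ∀ r > (0 : ℝ), a r ∈ Set.Icc 0 (1 / e₁))
    (hliminf : Filter.liminf (fun r => |deriv a r| / r) Filter.atTop = 0) :
    (∃ R > (0 : ℝ), ∀ r ≥ R, 0 < deriv a r) ∧
    ∃ aInf ∈ Set.Icc (0 : ℝ) (1 / e₁), Filter.Tendsto a Filter.atTop (nhds aInf) :=
  stmt_17_general e₁ a hineq hbdd
end

section
/- Let $q : [R, \infty) \to \mathbb{R}$ be continuous with $q(r) \to \lambda^2$ as $r \to \infty$ for some $\lambda > 0$, and let $g \in C^2([R,\infty))$ be a bounded nonnegative solution of $g'' + \frac{g'}{r} = q(r) g$ with $g(r) \to 0$ as $r \to \infty$. Then for every $\varepsilon \in (0,1)$, $g(r) = O(e^{-\lambda(1-\varepsilon) r})$ as $r \to \infty$. -/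
/-!
Put `μ = λ(1 - ε)` and compare `g` with `C e^{-μr}` beyond a point `R₀ ≥ 0` after which
`q > μ²`, taking `C` so large that `w = g - C e^{-μr}` is `≤ 0` at `R₀`. Since `w → 0`, a
positive value of `w` on `[R₀, ∞)` would give a positive interior maximum, where `w' = 0`.
There the equation yields `w'' = q g + μ C e^{-μr} / r - μ² C e^{-μr} > μ² w > 0`, so by the
second derivative test the maximum is also a local minimum; then `w` is locally constant and
`w'' = 0`, a contradiction.
-/

open Filter Set Real Topology

theorem nonpos_of_tendsto_zero_of_deriv_deriv_pos {w : ℝ → ℝ} {a : ℝ}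
    (hw : ContinuousOn w (Ici a)) (ha : w a ≤ 0) (hlim : Tendsto w atTop (𝓝 0))
    (hcrit : ∀ x ∈ Ioi a, 0 < w x → deriv w x = 0 → 0 < deriv (deriv w) x) :
    ∀ x ∈ Ici a, w x ≤ 0 := by
  intro x₁ hx₁
  by_contra! hpos
  obtain ⟨T, hT⟩ := eventually_atTop.1 (hlim.eventually (gt_mem_nhds hpos))
  obtain ⟨x₀, hx₀, hmax⟩ : ∃ x₀ ∈ Ici a, IsMaxOn w (Ici a) x₀ := by
    refine hw.exists_isMaxOn' isClosed_Ici hx₁ (mem_inf_principal.2 (mem_cocompact.2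
      ⟨Icc a T, isCompact_Icc, fun x hx hxa => (hT x ?_).le⟩))
    by_contra! hxT
    exact hx ⟨hxa, hxT.le⟩
  have hwx₀ : 0 < w x₀ := hpos.trans_le (hmax hx₁)
  have hax₀ : a < x₀ := hx₀.lt_of_ne (by rintro rfl; linarith)
  have hnhds : Ici a ∈ 𝓝 x₀ := Ici_mem_nhds hax₀
  have hlocmax : IsLocalMax w x₀ := hmax.isLocalMax hnhds
  have hw''₀ := hcrit x₀ hax₀ hwx₀ hlocmax.deriv_eq_zero
  have hlocmin : IsLocalMin w x₀ :=
    isLocalMin_of_deriv_deriv_pos hw''₀ hlocmax.deriv_eq_zero (hw.continuousAt hnhds)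
  have hconst : w =ᶠ[𝓝 x₀] fun _ => w x₀ :=
    (hlocmax.and hlocmin).mono fun y hy => le_antisymm hy.1 hy.2
  rw [hconst.deriv.deriv_eq] at hw''₀
  simp at hw''₀

theorem deriv_const_mul_exp_neg_mul (C μ : ℝ) :
    deriv (fun r => C * exp (-μ * r)) = fun r => -μ * C * exp (-μ * r) := by
  funext r
  have := (((hasDerivAt_id r).const_mul (-μ)).exp.const_mul C).deriv
  simp only [id, mul_one] at this
  rw [this]; ring

theorem deriv_deriv_sub_of_contDiffOn {g h : ℝ → ℝ} {s : Set ℝ} {x : ℝ} (hs : IsOpen s)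
    (hx : x ∈ s) (hg : ContDiffOn ℝ 2 g s) (hh : ContDiff ℝ 2 h) :
    deriv (deriv fun r => g r - h r) x = deriv (deriv g) x - deriv (deriv h) x := by
  have hg' : ContDiffOn ℝ 1 (deriv g) s := hg.deriv_of_isOpen hs (by norm_num)
  have hh' : ContDiff ℝ 1 (deriv h) := hh.iterate_deriv' 1 1
  have hderiv : (deriv fun r => g r - h r) =ᶠ[𝓝 x] fun r => deriv g r - deriv h r :=
    eventually_of_mem (hs.mem_nhds hx) fun y hy =>
      deriv_sub ((hg.differentiableOn (by norm_num) y hy).differentiableAt (hs.mem_nhds hy))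
        (hh.differentiable (by norm_num) y)
  rw [hderiv.deriv_eq, deriv_fun_sub ((hg'.differentiableOn one_ne_zero x hx).differentiableAt
    (hs.mem_nhds hx)) (hh'.differentiable one_ne_zero x)]

theorem derivs_sub_const_mul_exp_neg_mul {g : ℝ → ℝ} {s : Set ℝ} {x : ℝ} (hs : IsOpen s)
    (hx : x ∈ s) (hg : ContDiffOn ℝ 2 g s) (C μ : ℝ) :
    deriv (fun r => g r - C * exp (-μ * r)) x = deriv g x + μ * C * exp (-μ * x) ∧
      deriv (deriv fun r => g r - C * exp (-μ * r)) x =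
        deriv (deriv g) x - μ ^ 2 * C * exp (-μ * x) := by
  constructor
  · rw [deriv_fun_sub ((hg.differentiableOn two_ne_zero x hx).differentiableAt
      (hs.mem_nhds hx)) (by fun_prop), deriv_const_mul_exp_neg_mul]
    ring
  · rw [deriv_deriv_sub_of_contDiffOn hs hx hg (by fun_prop),
      deriv_const_mul_exp_neg_mul, deriv_const_mul_exp_neg_mul]
    ring

theorem sub_deriv_deriv_pos_of_radial_laplacian_eq {q g : ℝ → ℝ} {C μ x : ℝ} (hC : 0 < C)
    (hμ : 0 < μ) (hx : 0 < x) (hqx : μ ^ 2 < q x)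
    (heq : deriv (deriv g) x + deriv g x / x = q x * g x) (hgx : C * exp (-μ * x) < g x)
    (hcrit : deriv g x + μ * C * exp (-μ * x) = 0) :
    0 < deriv (deriv g) x - μ ^ 2 * C * exp (-μ * x) := by
  have hE := exp_pos (-μ * x)
  have hqg : μ ^ 2 * g x < q x * g x := mul_lt_mul_of_pos_right hqx ((mul_pos hC hE).trans hgx)
  have hdrift : 0 < μ * C * exp (-μ * x) / x := by positivity
  have hg'' : deriv (deriv g) x = q x * g x + μ * C * exp (-μ * x) / x := by
    rw [← heq, eq_neg_of_add_eq_zero_left hcrit]; ring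
  have hμg : μ ^ 2 * (C * exp (-μ * x)) < μ ^ 2 * g x :=
    mul_lt_mul_of_pos_left hgx (by positivity)
  rw [hg'']
  linarith

theorem exists_le_mul_exp_neg_of_radial_laplacian_eq {R μ : ℝ} {q g : ℝ → ℝ} (hμ : 0 < μ)
    (hq : ∀ᶠ r in atTop, μ ^ 2 < q r) (hg : ContDiffOn ℝ 2 g (Ici R))
    (heq : ∀ r ∈ Ioi R, deriv (deriv g) r + deriv g r / r = q r * g r)
    (hlim : Tendsto g atTop (𝓝 0)) :
    ∃ C > 0, ∃ R' : ℝ, ∀ r ≥ R', g r ≤ C * exp (-μ * r) := by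
  obtain ⟨R₀, hR₀⟩ :=
    eventually_atTop.1 (hq.and ((eventually_ge_atTop R).and (eventually_ge_atTop 0)))
  obtain ⟨-, hRR₀, hR₀_nonneg⟩ := hR₀ R₀ le_rfl
  set C := max (g R₀ * exp (μ * R₀)) 1
  have hC : 0 < C := lt_max_of_lt_right one_pos
  have hw_start : g R₀ - C * exp (-μ * R₀) ≤ 0 := by
    have : g R₀ = g R₀ * exp (μ * R₀) * exp (-μ * R₀) := by
      rw [mul_assoc, ← exp_add]; simp
    rw [sub_nonpos, this]
    exact mul_le_mul_of_nonneg_right (le_max_left _ _) (exp_pos _).le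
  have hw_lim : Tendsto (fun r => g r - C * exp (-μ * r)) atTop (𝓝 0) := by
    have : Tendsto (fun r => C * exp (-μ * r)) atTop (𝓝 0) := by
      simpa using (tendsto_exp_atBot.comp
        (tendsto_id.const_mul_atTop_of_neg (neg_neg_of_pos hμ))).const_mul C
    simpa using hlim.sub this
  have hw_cont : ContinuousOn (fun r => g r - C * exp (-μ * r)) (Ici R₀) :=
    (hg.continuousOn.mono (Ici_subset_Ici.2 hRR₀)).sub (by fun_prop)
  refine ⟨C, hC, R₀, fun r hr => sub_nonpos.1
    (nonpos_of_tendsto_zero_of_deriv_deriv_pos hw_cont hw_start hw_lim ?_ r hr)⟩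
  intro x hx hwx hdw
  obtain ⟨hqx, -, -⟩ := hR₀ x hx.le
  have hxR : x ∈ Ioi R := hRR₀.trans_lt hx
  obtain ⟨hw', hw''⟩ :=
    derivs_sub_const_mul_exp_neg_mul isOpen_Ioi hxR (hg.mono Ioi_subset_Ici_self) C μ
  rw [hw'']
  rw [hw'] at hdw
  exact sub_deriv_deriv_pos_of_radial_laplacian_eq hC hμ (hR₀_nonneg.trans_lt hx) hqx
    (heq x hxR) (sub_pos.1 hwx) hdw

theorem stmt_19_general (R lam : ℝ) (hlam : 0 < lam) (q g : ℝ → ℝ)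
    (hqlim : Filter.Tendsto q Filter.atTop (nhds (lam ^ 2)))
    (hg : ContDiffOn ℝ 2 g (Set.Ici R))
    (heq : ∀ r ∈ Set.Ioi R, deriv (deriv g) r + deriv g r / r = q r * g r)
    (hlim : Filter.Tendsto g Filter.atTop (nhds 0)) :
    ∀ ε ∈ Set.Ioo (0 : ℝ) 1, ∃ C > (0 : ℝ), ∃ R' : ℝ, ∀ r ≥ R',
      g r ≤ C * Real.exp (-lam * (1 - ε) * r) := by
  intro ε hε
  have hμ : 0 < lam * (1 - ε) := mul_pos hlam (sub_pos.2 hε.2)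
  have hμlam : (lam * (1 - ε)) ^ 2 < lam ^ 2 :=
    pow_lt_pow_left₀ (mul_lt_of_lt_one_right hlam (by linarith [hε.1])) hμ.le two_ne_zero
  obtain ⟨C, hC, R', hR'⟩ := exists_le_mul_exp_neg_of_radial_laplacian_eq hμ
    (hqlim.eventually (lt_mem_nhds hμlam)) hg heq hlim
  exact ⟨C, hC, R', fun r hr => by simpa only [neg_mul] using hR' r hr⟩

theorem stmt_19 (R lam : ℝ) (hlam : 0 < lam) (q g : ℝ → ℝ)
    (hq : ContinuousOn q (Set.Ici R))
    (hqlim : Filter.Tendsto q Filter.atTop (nhds (lam ^ 2)))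
    (hg : ContDiffOn ℝ 2 g (Set.Ici R))
    (hbdd : ∃ K : ℝ, ∀ r ∈ Set.Ici R, |g r| ≤ K)
    (hpos : ∀ r ∈ Set.Ici R, 0 ≤ g r)
    (heq : ∀ r ∈ Set.Ioi R, deriv (deriv g) r + deriv g r / r = q r * g r)
    (hlim : Filter.Tendsto g Filter.atTop (nhds 0)) :
    ∀ ε ∈ Set.Ioo (0 : ℝ) 1, ∃ C > (0 : ℝ), ∃ R' : ℝ, ∀ r ≥ R',
      g r ≤ C * Real.exp (-lam * (1 - ε) * r) :=
  stmt_19_general R lam hlam q g hqlim hg heq hlim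
end
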